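/- arXiv:1305.5395 — 6 statements merged into one kernel-verified Lean document; each statement's English description precedes it below -/
import Mathlib

section
/- Let a, b be nonzero complex numbers whose arguments (taken in [0, π)) satisfy arg a < arg(a+b). Then arg(a+b) < arg b (where a + b is nonzero). -/
/-!
The nonzero complex numbers with argument in `[0, π)` form a half-open half plane, which is
closed under addition. On it, `arg z < arg w` is equivalent to `0 < Im (conj z * w)`, since this
imaginary part is `‖z‖ ‖w‖ sin (arg w - arg z)` and `arg w - arg z ∈ (-π, π)`. As
`Im (conj a * (a + b)) = Im (conj a * b) = Im (conj (a + b) * b)`, the inequality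
`arg a < arg (a + b)` transfers to `arg (a + b) < arg b`.
-/

open Complex ComplexConjugate Real Set

namespace Complex

lemma im_conj_mul_eq_norm_mul_norm_mul_sin {z w : ℂ} (hz : z ≠ 0) (hw : w ≠ 0) :
    (conj z * w).im = ‖z‖ * ‖w‖ * Real.sin (w.arg - z.arg) := by
  have hz' : ‖z‖ ≠ 0 := norm_ne_zero_iff.mpr hz
  have hw' : ‖w‖ ≠ 0 := norm_ne_zero_iff.mpr hw
  rw [Real.sin_sub, sin_arg, sin_arg, cos_arg hz, cos_arg hw, mul_im, conj_re, conj_im]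
  field_simp
  ring

lemma arg_lt_arg_iff_im_conj_mul_pos {z w : ℂ} (hz : z ≠ 0) (hw : w ≠ 0)
    (hz' : z.arg ∈ Ico 0 π) (hw' : w.arg ∈ Ico 0 π) :
    z.arg < w.arg ↔ 0 < (conj z * w).im := by
  rw [im_conj_mul_eq_norm_mul_norm_mul_sin hz hw,
    mul_pos_iff_of_pos_left (mul_pos (norm_pos_iff.mpr hz) (norm_pos_iff.mpr hw))]
  constructor
  · intro h
    exact Real.sin_pos_of_pos_of_lt_pi (by linarith) (by linarith [hz'.1, hw'.2])
  · intro h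
    by_contra! hle
    have := Real.sin_nonpos_of_nonpos_of_neg_pi_le (sub_nonpos.mpr hle)
      (by linarith [hz'.2, hw'.1])
    linarith

lemma add_ne_zero_and_arg_mem_Ico {a b : ℂ} (ha : a ≠ 0)
    (ha' : a.arg ∈ Ico 0 π) (hb' : b.arg ∈ Ico 0 π) :
    a + b ≠ 0 ∧ (a + b).arg ∈ Ico 0 π := by
  simp only [mem_Ico, arg_nonneg_iff, arg_lt_pi_iff] at ha' hb' ⊢
  by_cases him : (a + b).im = 0
  · have hai : a.im = 0 := by simp only [add_im] at him; linarith [ha'.1, hb'.1]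
    have hbi : b.im = 0 := by simp only [add_im] at him; linarith [ha'.1, hb'.1]
    have hare : 0 < a.re :=
      lt_of_le_of_ne (ha'.2.resolve_right (not_not.mpr hai)) fun h => ha (ext h.symm hai)
    have hbre : 0 ≤ b.re := hb'.2.resolve_right (not_not.mpr hbi)
    have hsum : 0 < (a + b).re := by rw [add_re]; linarith
    exact ⟨fun h => by simp [h] at hsum, him.symm.le, Or.inl hsum.le⟩
  · exact ⟨fun h => him (by simp [h]), by rw [add_im]; linarith [ha'.1, hb'.1], Or.inr him⟩

lemma im_conj_mul_add_right (a b : ℂ) : (conj a * (a + b)).im = (conj a * b).im := by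
  simp only [mul_add, add_im, mul_im, conj_re, conj_im]
  ring

lemma im_conj_add_mul_right (a b : ℂ) : (conj (a + b) * b).im = (conj a * b).im := by
  simp only [map_add, add_mul, add_im, mul_im, conj_re, conj_im]
  ring

end Complex

/-- Strict seesaw property: if `a, b` are nonzero complex numbers with arguments in
`[0, π)` and `arg a < arg (a + b)`, then `a + b` is nonzero and `arg (a + b) < arg b`. -/
theorem stmt_2 (a b : ℂ) (ha : a ≠ 0) (hb : b ≠ 0)
    (ha0 : 0 ≤ a.arg) (ha1 : a.arg < Real.pi)
    (hb0 : 0 ≤ b.arg) (hb1 : b.arg < Real.pi)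
    (h : a.arg < (a + b).arg) :
    a + b ≠ 0 ∧ (a + b).arg < b.arg := by
  have ha' : a.arg ∈ Ico 0 π := ⟨ha0, ha1⟩
  have hb' : b.arg ∈ Ico 0 π := ⟨hb0, hb1⟩
  obtain ⟨hab, hab'⟩ := add_ne_zero_and_arg_mem_Ico ha ha' hb'
  refine ⟨hab, ?_⟩
  rw [arg_lt_arg_iff_im_conj_mul_pos hab hb hab' hb', im_conj_add_mul_right,
    ← im_conj_mul_add_right]
  exact (arg_lt_arg_iff_im_conj_mul_pos ha hab ha' hab').mp h
end

section
/- Fix n ≥ 1 and complex numbers z₁, …, zₙ, all nonzero with arguments in [0, π), and let γ = arg(z₁ + ⋯ + zₙ) (assume the sum is nonzero). For each residue i ∈ ℤ/n, define C_i ⊆ ℤ/n as follows: C_i = {i, i−1, …, i−t_i} where t_i ≥ 0 is the maximal integer ≤ n−1 such that arg(z_i + z_{i−1} + ⋯ + z_{i−v}) ≥ γ for all 0 ≤ v ≤ t_i (indices mod n), and C_i = ∅ if arg(z_i) < γ. Then for any i, j with C_i ∩ C_j ≠ ∅, either C_i ⊆ C_j or C_j ⊆ C_i. -/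
/-!
Write `D` for the set of nonzero complex numbers of phase in `[0, π)`; it is closed under
addition, and so is `{w ∈ D | γ ≤ arg w}` for every real `γ` (rotate by `-γ`: the condition
becomes `0 ≤ im`). Now suppose `C i` and `C j` share the point `i - a = j - b` with `a ≤ b`,
so `i = j - d` with `d = b - a`. The partial sums of `j` up to length `b ≥ d` have phase `≥ γ`,
and every partial sum of `j` longer than `d` splits as such a sum plus a partial sum of `i`.
Hence each point `i - c` of `C i` is `j - (d + c)` with all partial sums of `j` up to length
`d + c` of phase `≥ γ`, i.e. lies in `C j`.
-/

open Complex Finset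

def phaseDomain : Set ℂ := {w | 0 ≤ w.im ∧ (w.im = 0 → 0 < w.re)}

lemma mem_phaseDomain_iff {w : ℂ} :
    w ∈ phaseDomain ↔ w ≠ 0 ∧ 0 ≤ w.arg ∧ w.arg < Real.pi := by
  simp only [arg_nonneg_iff, (arg_le_pi w).lt_iff_ne, ne_eq, arg_eq_pi_iff]
  constructor
  · rintro ⟨him, hre⟩
    refine ⟨fun h0 => by simp [h0] at hre, him, fun h => (hre h.2).not_gt h.1⟩
  · rintro ⟨h0, him, hpi⟩
    refine ⟨him, fun him0 => ?_⟩
    rcases lt_trichotomy w.re 0 with hre | hre | hre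
    · exact absurd ⟨hre, him0⟩ hpi
    · exact absurd (Complex.ext hre him0) h0
    · exact hre

lemma add_mem_phaseDomain {a b : ℂ} (ha : a ∈ phaseDomain) (hb : b ∈ phaseDomain) :
    a + b ∈ phaseDomain := by
  refine ⟨by simp only [add_im]; linarith [ha.1, hb.1], fun h => ?_⟩
  simp only [add_im] at h
  simp only [add_re]
  linarith [ha.2 (by linarith [ha.1, hb.1]), hb.2 (by linarith [ha.1, hb.1])]

lemma sum_mem_phaseDomain {ι : Type*} {s : Finset ι} {f : ι → ℂ} (hs : s.Nonempty)
    (h : ∀ i ∈ s, f i ∈ phaseDomain) : ∑ i ∈ s, f i ∈ phaseDomain :=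
  sum_induction_nonempty f (· ∈ phaseDomain) (fun _ _ => add_mem_phaseDomain) hs h

lemma im_mul_exp_neg_mul_I (w : ℂ) (γ : ℝ) :
    (w * exp (-(γ * I))).im = ‖w‖ * Real.sin (w.arg - γ) := by
  conv_lhs => rw [← norm_mul_exp_arg_mul_I w]
  rw [mul_assoc, ← exp_add, show (w.arg : ℂ) * I + -(γ * I) = ((w.arg - γ : ℝ) : ℂ) * I by
    push_cast; ring, im_ofReal_mul, exp_ofReal_mul_I_im]

lemma le_arg_iff_im_mul_exp_nonneg {w : ℂ} {γ : ℝ} (hw : w ∈ phaseDomain) (hγ0 : 0 ≤ γ)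
    (hγπ : γ < Real.pi) : γ ≤ w.arg ↔ 0 ≤ (w * exp (-(γ * I))).im := by
  obtain ⟨hw0, harg0, hargπ⟩ := mem_phaseDomain_iff.mp hw
  have hnorm : 0 < ‖w‖ := norm_pos_iff.mpr hw0
  rw [im_mul_exp_neg_mul_I]
  constructor
  · intro h
    exact mul_nonneg hnorm.le (Real.sin_nonneg_of_nonneg_of_le_pi (by linarith) (by linarith))
  · intro h
    by_contra! hlt
    have := Real.sin_neg_of_neg_of_neg_pi_lt (x := w.arg - γ) (by linarith) (by linarith)
    nlinarith

lemma le_arg_add {a b : ℂ} {γ : ℝ} (ha : a ∈ phaseDomain) (hb : b ∈ phaseDomain)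
    (hga : γ ≤ a.arg) (hgb : γ ≤ b.arg) : γ ≤ (a + b).arg := by
  have hab := add_mem_phaseDomain ha hb
  rcases le_or_gt γ 0 with hγ0 | hγ0
  · exact hγ0.trans (mem_phaseDomain_iff.mp hab).2.1
  have hγπ : γ < Real.pi := hga.trans_lt (mem_phaseDomain_iff.mp ha).2.2
  rw [le_arg_iff_im_mul_exp_nonneg hab hγ0.le hγπ, add_mul, add_im]
  exact add_nonneg ((le_arg_iff_im_mul_exp_nonneg ha hγ0.le hγπ).mp hga)
    ((le_arg_iff_im_mul_exp_nonneg hb hγ0.le hγπ).mp hgb)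

section Arcs

variable {M : Type*} [AddCommMonoid M] {n : ℕ}

def backwardSum (z : ZMod n → M) (i : ZMod n) (v : ℕ) : M :=
  ∑ u ∈ range (v + 1), z (i - u)

/-- The paper's arc `C i`, for the condition `P w` = "phase of `w` is `≥ γ`". -/
def arc (P : M → Prop) (z : ZMod n → M) (i : ZMod n) : Set (ZMod n) :=
  {j | ∃ v ≤ n - 1, j = i - v ∧ ∀ u ≤ v, P (backwardSum z i u)}

lemma backwardSum_add (z : ZMod n → M) (j : ZMod n) (m u : ℕ) :
    backwardSum z j (m + 1 + u) = backwardSum z j m + backwardSum z (j - (m + 1 : ℕ)) u := by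
  rw [backwardSum, add_assoc, sum_range_add]
  refine congrArg _ (sum_congr rfl fun w _ => congrArg z ?_)
  push_cast
  ring

variable {P : M → Prop} {z : ZMod n → M}

lemma sub_mem_arc [NeZero n] {j : ZMod n} {w : ℕ} (h : ∀ u ≤ w, P (backwardSum z j u)) :
    j - w ∈ arc P z j := by
  have hn : 0 < n := Nat.pos_of_neZero n
  refine ⟨w % n, by have := Nat.mod_lt w hn; omega, by rw [ZMod.natCast_mod], fun u hu => ?_⟩
  exact h u (hu.trans (Nat.mod_le w n))

lemma backwardSum_forall_le_add (hP : ∀ a b, P a → P b → P (a + b)) {j : ZMod n} {d c : ℕ}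
    (hj : ∀ u < d, P (backwardSum z j u)) (hi : ∀ u ≤ c, P (backwardSum z (j - d) u)) :
    ∀ u ≤ d + c, P (backwardSum z j u) := by
  intro u hu
  rcases lt_or_ge u d with hud | hdu
  · exact hj u hud
  obtain ⟨u', rfl⟩ := Nat.exists_eq_add_of_le hdu
  rcases d with _ | m
  · simpa using hi u' (by omega)
  · rw [backwardSum_add]
    exact hP _ _ (hj m (by omega)) (hi u' (by omega))

lemma arc_subset_arc [NeZero n] (hP : ∀ a b, P a → P b → P (a + b)) {i j : ZMod n} {a b : ℕ}
    (hab : a ≤ b) (hij : i - a = j - b) (hj : ∀ u ≤ b, P (backwardSum z j u)) :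
    arc P z i ⊆ arc P z j := by
  obtain ⟨d, rfl⟩ := Nat.exists_eq_add_of_le hab
  have hi : i = j - d := by push_cast at hij; linear_combination hij
  rintro _ ⟨c, -, rfl, hc⟩
  subst hi
  have hgood := backwardSum_forall_le_add hP (fun u hu => hj u (by omega)) hc
  simpa [sub_sub] using sub_mem_arc hgood

theorem arc_subset_or_subset [NeZero n] (hP : ∀ a b, P a → P b → P (a + b)) (i j : ZMod n)
    (h : (arc P z i ∩ arc P z j).Nonempty) : arc P z i ⊆ arc P z j ∨ arc P z j ⊆ arc P z i := by
  obtain ⟨k, ⟨a, -, rfl, ha⟩, ⟨b, -, hk, hb⟩⟩ := h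
  rcases le_total a b with hab | hba
  · exact Or.inl (arc_subset_arc hP hab hk hb)
  · exact Or.inr (arc_subset_arc hP hba hk.symm ha)

end Arcs

theorem stmt_4_general (n : ℕ) [NeZero n]
    (z : ZMod n → ℂ)
    (hz : ∀ i, z i ≠ 0 ∧ 0 ≤ (z i).arg ∧ (z i).arg < Real.pi)
    (γ : ℝ)
    (S : ZMod n → ℕ → ℂ)
    (hS : ∀ i v, S i v = ∑ u ∈ Finset.range (v + 1), z (i - (u : ZMod n)))
    (C : ZMod n → Set (ZMod n))
    (hC : ∀ i, C i = {j | ∃ v : ℕ, v ≤ n - 1 ∧ j = i - (v : ZMod n) ∧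
      ∀ u ≤ v, γ ≤ (S i u).arg}) :
    ∀ i j : ZMod n, (C i ∩ C j).Nonempty → C i ⊆ C j ∨ C j ⊆ C i := by
  obtain rfl : S = backwardSum z := funext₂ hS
  have hD : ∀ i v, backwardSum z i v ∈ phaseDomain := fun i v =>
    sum_mem_phaseDomain nonempty_range_add_one fun _ _ => mem_phaseDomain_iff.mpr (hz _)
  obtain rfl : C = arc (fun w => w ∈ phaseDomain ∧ γ ≤ w.arg) z := by
    funext i
    simp only [hC i, arc, hD, true_and]
  exact arc_subset_or_subset fun a b ha hb =>
    ⟨add_mem_phaseDomain ha.1 hb.1, le_arg_add ha.1 hb.1 ha.2 hb.2⟩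

/-- Interval-nesting lemma for a discrete stability function on the cyclic quiver:
let `z : ZMod n → ℂ` be nonzero with arguments in `[0, π)`, `γ` the argument of the
total sum (assumed nonzero), and for each `i` let `C i` be the descending arc
`{i, i−1, …, i−tᵢ}` consisting of those `i − v` (`0 ≤ v ≤ n−1`) such that every backward
partial sum `z i + z (i−1) + ⋯ + z (i−u)` with `u ≤ v` has argument `≥ γ` (so `C i = ∅`
when `arg (z i) < γ`).  Then any two such arcs that meet are nested. -/
theorem stmt_4 (n : ℕ) [NeZero n] (hn : 1 ≤ n)
    (z : ZMod n → ℂ)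
    (hz : ∀ i, z i ≠ 0 ∧ 0 ≤ (z i).arg ∧ (z i).arg < Real.pi)
    (hsum : (∑ i : ZMod n, z i) ≠ 0)
    (γ : ℝ) (hγ : γ = (∑ i : ZMod n, z i).arg)
    (S : ZMod n → ℕ → ℂ)
    (hS : ∀ i v, S i v = ∑ u ∈ Finset.range (v + 1), z (i - (u : ZMod n)))
    (C : ZMod n → Set (ZMod n))
    (hC : ∀ i, C i = {j | ∃ v : ℕ, v ≤ n - 1 ∧ j = i - (v : ZMod n) ∧
      ∀ u ≤ v, γ ≤ (S i u).arg}) :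
    ∀ i j : ZMod n, (C i ∩ C j).Nonempty → C i ⊆ C j ∨ C j ⊆ C i :=
  stmt_4_general n z hz γ S hS C hC
end

section
/- Fix n ≥ 2 and nonzero complex numbers z₁, …, zₙ with arguments in [0, π), and let γ = arg(z₁ + ⋯ + zₙ) (sum assumed nonzero). Then there exists a residue i₀ ∈ ℤ/n such that for every 0 ≤ v ≤ n−1, the partial sum z_{i₀} + z_{i₀−1} + ⋯ + z_{i₀−v} (indices mod n) is nonzero with argument ≥ γ. -/
/-!
Let `T` be the total sum. The real numbers `aᵢ = Im (conj T * zᵢ)` sum to `Im ‖T‖² = 0`, so by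
the cycle lemma some cyclic starting point makes all partial sums of the `aᵢ` nonnegative,
i.e. every partial sum `P` satisfies `Im (conj T * P) ≥ 0`. Nonzero numbers with argument in
`[0, π)` are closed under addition, so `P` and `T` both have argument in `[0, π)`, and there
`Im (conj T * P) ≥ 0` is equivalent to `arg T ≤ arg P`.
-/

open Complex ComplexConjugate Finset

section CycleLemma

variable {α : Type*} [AddCommGroup α] [LinearOrder α] [IsOrderedAddMonoid α]

theorem Function.Periodic.sum_range_mod_le {f : ℕ → α} {n : ℕ} (hf : Function.Periodic f n)
    (h : 0 ≤ ∑ u ∈ range n, f u) (k : ℕ) :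
    ∑ u ∈ range (k % n), f u ≤ ∑ u ∈ range k, f u := by
  suffices ∀ q r, ∑ u ∈ range r, f u ≤ ∑ u ∈ range (n * q + r), f u by
    simpa only [Nat.div_add_mod] using this (k / n) (k % n)
  intro q r
  induction q with
  | zero => simp
  | succ q ih =>
    have hshift : ∀ u, f (n + u) = f u := fun u => by rw [add_comm]; exact hf u
    rw [Nat.mul_succ, add_comm (n * q), add_assoc, sum_range_add]
    simp only [hshift]
    exact le_add_of_nonneg_of_le h ih

/-- The cycle lemma: start where the prefix sums attain their minimum. -/
theorem Function.Periodic.exists_forall_sum_range_add_nonneg {f : ℕ → α} {n : ℕ}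
    (hf : Function.Periodic f n) (hn : 0 < n) (h : 0 ≤ ∑ u ∈ range n, f u) :
    ∃ j, ∀ v, 0 ≤ ∑ u ∈ range v, f (j + u) := by
  obtain ⟨j, -, hmin⟩ := (range n).exists_min_image (fun m => ∑ u ∈ range m, f u)
    (nonempty_range_iff.mpr hn.ne')
  refine ⟨j, fun v => ?_⟩
  have hle : ∑ u ∈ range j, f u ≤ ∑ u ∈ range (j + v), f u :=
    (hmin _ (mem_range.mpr (Nat.mod_lt _ hn))).trans (hf.sum_range_mod_le h _)
  rw [sum_range_add] at hle
  simpa using hle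

theorem ZMod.sum_range_natCast {M : Type*} [AddCommMonoid M] (n : ℕ) [NeZero n]
    (g : ZMod n → M) : ∑ u ∈ range n, g u = ∑ i, g i :=
  sum_nbij' (fun u => (u : ZMod n)) ZMod.val (fun _ _ => mem_univ _)
    (fun i _ => mem_range.mpr (ZMod.val_lt i))
    (fun _ hu => ZMod.val_cast_of_lt (mem_range.mp hu))
    (fun i _ => ZMod.natCast_zmod_val i) (fun _ _ => rfl)

theorem ZMod.exists_forall_sum_range_sub_nonneg {n : ℕ} [NeZero n] (a : ZMod n → α)
    (h : 0 ≤ ∑ i, a i) : ∃ i₀, ∀ v, 0 ≤ ∑ u ∈ range v, a (i₀ - u) := by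
  have hf : Function.Periodic (fun k : ℕ => a (-k)) n := fun k => by simp
  have hsum : ∑ u ∈ range n, a (-u) = ∑ i, a i := by
    rw [ZMod.sum_range_natCast n (fun i => a (-i))]
    exact Fintype.sum_equiv (Equiv.neg _) _ _ fun _ => rfl
  obtain ⟨j, hj⟩ := hf.exists_forall_sum_range_add_nonneg (Nat.pos_of_neZero n) (hsum ▸ h)
  refine ⟨-j, fun v => ?_⟩
  simpa [sub_eq_add_neg, add_comm] using hj v

end CycleLemma

namespace Complex

def halfOpenUpperHalfPlane : AddSubsemigroup ℂ where
  carrier := {z | 0 < z.im ∨ (z.im = 0 ∧ 0 < z.re)}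
  add_mem' {a b} ha hb := by
    simp only [Set.mem_ofPred_eq, add_im, add_re] at ha hb ⊢
    rcases ha with ha | ⟨ha, ha'⟩ <;> rcases hb with hb | ⟨hb, hb'⟩
    · exact Or.inl (by linarith)
    · exact Or.inl (by linarith)
    · exact Or.inl (by linarith)
    · exact Or.inr ⟨by linarith, by linarith⟩

theorem mem_halfOpenUpperHalfPlane_iff_arg {z : ℂ} :
    z ∈ halfOpenUpperHalfPlane ↔ z ≠ 0 ∧ 0 ≤ arg z ∧ arg z < Real.pi := by
  change 0 < z.im ∨ (z.im = 0 ∧ 0 < z.re) ↔ _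
  rw [arg_nonneg_iff, arg_lt_pi_iff, Ne, Complex.ext_iff]
  constructor
  · rintro (him | ⟨him, hre⟩)
    · exact ⟨fun h => him.ne' h.2, him.le, Or.inr him.ne'⟩
    · exact ⟨fun h => hre.ne' h.1, him.ge, Or.inl hre.le⟩
  · rintro ⟨hz, him, hre⟩
    rcases him.lt_or_eq with him | him
    · exact Or.inl him
    · refine Or.inr ⟨him.symm, ?_⟩
      simp only [← him, zero_im, ne_eq, not_true_eq_false, or_false, and_true] at hz hre
      exact lt_of_le_of_ne hre (Ne.symm hz)

theorem sum_mem_halfOpenUpperHalfPlane {ι : Type*} {s : Finset ι} {f : ι → ℂ}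
    (hs : s.Nonempty) (hf : ∀ i ∈ s, f i ∈ halfOpenUpperHalfPlane) :
    ∑ i ∈ s, f i ∈ halfOpenUpperHalfPlane :=
  sum_induction_nonempty f (· ∈ halfOpenUpperHalfPlane) (fun _ _ => add_mem) hs hf

theorem arg_le_arg_iff_im_conj_mul_nonneg {w z : ℂ} (hw : w ∈ halfOpenUpperHalfPlane)
    (hz : z ∈ halfOpenUpperHalfPlane) : arg w ≤ arg z ↔ 0 ≤ (conj w * z).im := by
  obtain ⟨hw0, hw_nonneg, hw_lt⟩ := mem_halfOpenUpperHalfPlane_iff_arg.1 hw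
  obtain ⟨hz0, hz_nonneg, hz_lt⟩ := mem_halfOpenUpperHalfPlane_iff_arg.1 hz
  have harg : arg (conj w * z) = arg z - arg w := by
    rw [arg_mul ((map_ne_zero _).mpr hw0) hz0, arg_conj, if_neg hw_lt.ne]
    · ring
    · rw [arg_conj, if_neg hw_lt.ne]
      constructor <;> linarith
  rw [← arg_nonneg_iff, harg, sub_nonneg]

end Complex

theorem stmt_5_general (n : ℕ) [NeZero n]
    (z : ZMod n → ℂ)
    (hz : ∀ i, z i ≠ 0 ∧ 0 ≤ (z i).arg ∧ (z i).arg < Real.pi)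
    (γ : ℝ) (hγ : γ = (∑ i : ZMod n, z i).arg) :
    ∃ i₀ : ZMod n, ∀ v : ℕ, v ≤ n - 1 →
      (∑ u ∈ Finset.range (v + 1), z (i₀ - (u : ZMod n))) ≠ 0 ∧
      γ ≤ (∑ u ∈ Finset.range (v + 1), z (i₀ - (u : ZMod n))).arg := by
  have hzH : ∀ i, z i ∈ halfOpenUpperHalfPlane :=
    fun i => mem_halfOpenUpperHalfPlane_iff_arg.2 (hz i)
  set T := ∑ i, z i
  have hT : T ∈ halfOpenUpperHalfPlane :=
    sum_mem_halfOpenUpperHalfPlane univ_nonempty fun i _ => hzH i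
  obtain ⟨i₀, hi₀⟩ := ZMod.exists_forall_sum_range_sub_nonneg (fun i => (conj T * z i).im) <| by
    rw [← im_sum, ← mul_sum, conj_mul', ← ofReal_pow, ofReal_im]
  refine ⟨i₀, fun v _ => ?_⟩
  have hP : ∑ u ∈ range (v + 1), z (i₀ - u) ∈ halfOpenUpperHalfPlane :=
    sum_mem_halfOpenUpperHalfPlane nonempty_range_add_one fun u _ => hzH _
  refine ⟨(mem_halfOpenUpperHalfPlane_iff_arg.1 hP).1,
    hγ ▸ (arg_le_arg_iff_im_conj_mul_nonneg hT hP).2 ?_⟩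
  rw [mul_sum, im_sum]
  exact hi₀ (v + 1)

/-- For nonzero complex numbers `z₁, …, zₙ` (`n ≥ 2`) with arguments in `[0, π)` and
nonzero total sum of argument `γ`, there is a residue `i₀ ∈ ℤ/n` such that every backward
cyclic partial sum `z i₀ + z (i₀−1) + ⋯ + z (i₀−v)` for `0 ≤ v ≤ n−1` is nonzero with
argument `≥ γ`. -/
theorem stmt_5 (n : ℕ) [NeZero n] (hn : 2 ≤ n)
    (z : ZMod n → ℂ)
    (hz : ∀ i, z i ≠ 0 ∧ 0 ≤ (z i).arg ∧ (z i).arg < Real.pi)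
    (hsum : (∑ i : ZMod n, z i) ≠ 0)
    (γ : ℝ) (hγ : γ = (∑ i : ZMod n, z i).arg) :
    ∃ i₀ : ZMod n, ∀ v : ℕ, v ≤ n - 1 →
      (∑ u ∈ Finset.range (v + 1), z (i₀ - (u : ZMod n))) ≠ 0 ∧
      γ ≤ (∑ u ∈ Finset.range (v + 1), z (i₀ - (u : ZMod n))).arg :=
  stmt_5_general n z hz γ hγ
end

section
/- Let Z be a stability function on the category 𝒯ₙ of nilpotent representations of the cyclic quiver with n vertices. Every Z-stable object has length at most n. Consequently there are only finitely many stable objects up to isomorphism. -/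
/-- A finite-dimensional nilpotent representation of the cyclic quiver `Δₙ`
(equivalently an object of `𝒯ₙ`): a finite-dimensional `k`-vector space with an internal
grading by `ZMod n` and a nilpotent linear endomorphism mapping the piece at vertex `i`
into the piece at vertex `i - 1`. -/
structure NilpRep (k : Type) [Field k] (n : ℕ) [NeZero n] where
  carrier : Type
  [acg : AddCommGroup carrier]
  [mod : Module k carrier]
  [fin : FiniteDimensional k carrier]
  grading : ZMod n → Submodule k carrier
  t : carrier →ₗ[k] carrier
  indep : ∀ i : ZMod n, Disjoint (grading i) (⨆ j, ⨆ (_ : j ≠ i), grading j)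
  total : (⨆ i, grading i) = ⊤
  maps : ∀ i, (grading i).map t ≤ grading (i - 1)
  nilpotent : ∃ N : ℕ, t ^ N = 0

attribute [instance] NilpRep.acg NilpRep.mod NilpRep.fin

variable {k : Type} [Field k] {n : ℕ} [NeZero n]

namespace NilpRep

/-- The dimension vector of a nilpotent representation, i.e. its class in `K₀(𝒯ₙ) ≅ ℤⁿ`. -/
noncomputable def dim (M : NilpRep k n) : ZMod n → ℤ := fun i => (Module.finrank k (M.grading i) : ℤ)

/-- The length of an object of `𝒯ₙ`, which equals its total dimension. -/
noncomputable def length (M : NilpRep k n) : ℕ := Module.finrank k M.carrier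

/-- A subrepresentation: a `t`-invariant homogeneous subspace. -/
def IsSubRep (M : NilpRep k n) (U : Submodule k M.carrier) : Prop :=
  U.map M.t ≤ U ∧ (⨆ i : ZMod n, (M.grading i ⊓ U)) = U

/-- The dimension vector of a subrepresentation. -/
noncomputable def subDim (M : NilpRep k n) (U : Submodule k M.carrier) : ZMod n → ℤ :=
  fun i => (Module.finrank k ↥(M.grading i ⊓ U) : ℤ)

/-- Isomorphism of nilpotent representations. -/
def RepIso (M N : NilpRep k n) : Prop :=
  ∃ e : M.carrier ≃ₗ[k] N.carrier,
    (∀ x, e (M.t x) = N.t (e x)) ∧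
    ∀ i, (M.grading i).map (e : M.carrier →ₗ[k] N.carrier) = N.grading i

/-- Indecomposability of a nonzero representation. -/
def Indec (M : NilpRep k n) : Prop :=
  M.dim ≠ 0 ∧ ∀ U V : Submodule k M.carrier, M.IsSubRep U → M.IsSubRep V →
    U ⊓ V = ⊥ → U ⊔ V = ⊤ → U = ⊥ ∨ V = ⊥

end NilpRep

/-- A stability function on `𝒯ₙ`, given on the Grothendieck group `K₀(𝒯ₙ) ≅ ℤⁿ`:
additive, and nonzero with argument in `[0, π)` on every nonzero effective class
(i.e. on the class of every nonzero object). -/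
def IsStabilityFunction (n : ℕ) [NeZero n] (Z : (ZMod n → ℤ) → ℂ) : Prop :=
  (∀ d e, Z (d + e) = Z d + Z e) ∧
  ∀ d : ZMod n → ℤ, (∀ i, 0 ≤ d i) → d ≠ 0 →
    Z d ≠ 0 ∧ 0 ≤ (Z d).arg ∧ (Z d).arg < Real.pi

/-- An object is `Z`-stable if it is nonzero and every nonzero proper subrepresentation
has strictly smaller phase. -/
def IsStable (Z : (ZMod n → ℤ) → ℂ) (M : NilpRep k n) : Prop :=
  M.dim ≠ 0 ∧ ∀ U : Submodule k M.carrier, M.IsSubRep U → U ≠ ⊥ → U ≠ ⊤ →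
    (Z (M.subDim U)).arg < (Z M.dim).arg

/-- An object is `Z`-semistable if it is nonzero and every nonzero proper
subrepresentation has phase at most that of the object. -/
def IsSemistable (Z : (ZMod n → ℤ) → ℂ) (M : NilpRep k n) : Prop :=
  M.dim ≠ 0 ∧ ∀ U : Submodule k M.carrier, M.IsSubRep U → U ≠ ⊥ → U ≠ ⊤ →
    (Z (M.subDim U)).arg ≤ (Z M.dim).arg

/-- A stability function is discrete if distinct (non-isomorphic) stable objects have
distinct phases. -/
def IsDiscreteStab (k : Type) [Field k] {n : ℕ} [NeZero n] (Z : (ZMod n → ℤ) → ℂ) : Prop :=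
  ∀ M N : NilpRep k n, IsStable Z M → IsStable Z N →
    (Z M.dim).arg = (Z N.dim).arg → NilpRep.RepIso M N

/-!
For a stable `M` every endomorphism `f` of the representation is zero or surjective: the range of
`f` and the homogeneous part of its kernel are subrepresentations whose classes add up to `[M]`,
and two nonzero classes in the closed upper half plane cannot both have smaller phase than their
sum. Applied to `t ^ n` this gives `t ^ n = 0`, so the nilpotency index `s + 1` of `t` is at most
`n`. Pick a homogeneous `x` with `t ^ s x ≠ 0` and a functional `ξ` that detects `t ^ s x` and
vanishes off its vertex; then `z ↦ ∑_{a + b = s} ξ (t ^ a z) • t ^ b x` is a nonzero endomorphism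
with range in the span of `x, t x, …, t ^ s x`. Hence `M` is cyclic with basis `t ^ j x`
(`j ≤ s`), and such an object is determined up to isomorphism by the vertex of `x` and its
length `s + 1 ≤ n`.
-/

open Module Submodule Finset ComplexConjugate

theorem iSupIndep.eq_of_le_of_iSup_le {ι α : Type*} [CompleteLattice α] [IsModularLattice α]
    {f g : ι → α} (hg : iSupIndep g) (hfg : f ≤ g) (h : iSup g ≤ iSup f) : f = g := by
  funext i
  have hdisj : Disjoint (⨆ (j) (_ : j ≠ i), f j) (g i) :=
    ((hg i).mono_right (iSup₂_mono fun j _ => hfg j)).symm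
  refine le_antisymm (hfg i) (le_of_eq ?_)
  calc g i = (f i ⊔ ⨆ (j) (_ : j ≠ i), f j) ⊓ g i := by
        rw [← iSup_split_single f i]; exact (inf_eq_right.mpr ((le_iSup g i).trans h)).symm
    _ = f i := by rw [sup_inf_assoc_of_le _ (hfg i), hdisj.eq_bot, sup_bot_eq]

theorem Submodule.finrank_map_add_finrank_inf_ker {K V W : Type*} [DivisionRing K]
    [AddCommGroup V] [Module K V] [FiniteDimensional K V] [AddCommGroup W] [Module K W]
    (f : V →ₗ[K] W) (p : Submodule K V) :
    finrank K (p.map f) + finrank K ↥(p ⊓ LinearMap.ker f) = finrank K p := by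
  rw [← (f.domRestrict p).finrank_range_add_finrank_ker, LinearMap.range_domRestrict,
    LinearMap.ker_domRestrict, ← map_comap_subtype, finrank_map_subtype_eq]

namespace Complex

lemma im_mul_conj_eq_norm_mul_norm_mul_sin (a c : ℂ) :
    (c * conj a).im = ‖c‖ * ‖a‖ * Real.sin (c.arg - a.arg) := by
  rw [mul_im, conj_re, conj_im, Real.sin_sub, ← norm_mul_sin_arg c, ← norm_mul_cos_arg a,
    ← norm_mul_cos_arg c, ← norm_mul_sin_arg a]
  ring

lemma im_mul_conj_pos_of_arg_lt {a c : ℂ} (ha : a ≠ 0) (ha0 : 0 ≤ a.arg) (hc : c.arg < Real.pi)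
    (h : a.arg < c.arg) : 0 < (c * conj a).im := by
  have hc0 : c ≠ 0 := by rintro rfl; rw [arg_zero] at h; linarith
  rw [im_mul_conj_eq_norm_mul_norm_mul_sin]
  have := Real.sin_pos_of_pos_of_lt_pi (x := c.arg - a.arg) (by linarith) (by linarith)
  positivity

lemma arg_add_le_max {a b : ℂ} (ha : a ≠ 0) (hb : b ≠ 0) (ha0 : 0 ≤ a.arg) (hb0 : 0 ≤ b.arg)
    (hab : (a + b).arg < Real.pi) : (a + b).arg ≤ max a.arg b.arg := by
  by_contra! h
  have hpos := add_pos (im_mul_conj_pos_of_arg_lt ha ha0 hab (le_max_left _ _ |>.trans_lt h))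
    (im_mul_conj_pos_of_arg_lt hb hb0 hab (le_max_right _ _ |>.trans_lt h))
  rw [← add_im, ← mul_add, ← map_add, mul_conj, ofReal_im] at hpos
  exact hpos.false

end Complex

section CyclicEnd

variable {R V : Type*} [CommSemiring R] [AddCommMonoid V] [Module R V]

def cyclicEnd (f : Module.End R V) (ξ : Module.Dual R V) (x : V) (s : ℕ) : Module.End R V :=
  ∑ p ∈ antidiagonal s, (ξ ∘ₗ (f ^ p.1)).smulRight ((f ^ p.2) x)

variable {f : Module.End R V} {ξ : Module.Dual R V} {x : V} {s : ℕ}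

lemma cyclicEnd_apply (z : V) :
    cyclicEnd f ξ x s z = ∑ p ∈ antidiagonal s, ξ ((f ^ p.1) z) • (f ^ p.2) x := by
  simp [cyclicEnd]

lemma commute_cyclicEnd (hf : f ^ (s + 1) = 0) : Commute f (cyclicEnd f ξ x s) := by
  ext z
  set F : ℕ × ℕ → V := fun p => ξ ((f ^ p.1) z) • (f ^ p.2) x
  have hleft : ∑ p ∈ antidiagonal (s + 1), F p = f (cyclicEnd f ξ x s z) := by
    rw [Finset.Nat.sum_antidiagonal_succ', cyclicEnd_apply, map_sum]
    simp [F, hf, pow_succ']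
  have hright : ∑ p ∈ antidiagonal (s + 1), F p = cyclicEnd f ξ x s (f z) := by
    rw [Finset.Nat.sum_antidiagonal_succ, cyclicEnd_apply]
    simp [F, hf, pow_succ]
  rw [Module.End.mul_apply, Module.End.mul_apply, ← hleft, hright]

lemma cyclicEnd_apply_pow_self (hf : f ^ (s + 1) = 0) :
    cyclicEnd f ξ x s ((f ^ s) x) = ξ ((f ^ s) x) • (f ^ s) x := by
  rw [cyclicEnd_apply, Finset.sum_eq_single_of_mem (0, s) (by simp)]
  · simp
  · intro p hp hne
    have hp1 : s + 1 ≤ p.1 + s := by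
      rw [HasAntidiagonal.mem_antidiagonal] at hp
      have : p.1 ≠ 0 := fun h0 => hne (Prod.ext h0 (by omega))
      omega
    rw [← Module.End.mul_apply, ← pow_add, pow_eq_zero_of_le hp1 hf]
    simp

lemma range_cyclicEnd_le :
    LinearMap.range (cyclicEnd f ξ x s) ≤
      span R (Set.range fun b : Fin (s + 1) => (f ^ (b : ℕ)) x) := by
  rintro _ ⟨z, rfl⟩
  rw [cyclicEnd_apply]
  refine sum_mem fun p hp => smul_mem _ _ (subset_span ⟨⟨p.2, ?_⟩, rfl⟩)
  have := HasAntidiagonal.mem_antidiagonal.mp hp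
  omega

end CyclicEnd

namespace NilpRep

variable (M : NilpRep k n)

lemma iSupIndep_grading : iSupIndep M.grading := M.indep

lemma pow_mem_grading {i : ZMod n} {x : M.carrier} (hx : x ∈ M.grading i) (m : ℕ) :
    (M.t ^ m) x ∈ M.grading (i - m) := by
  induction m with
  | zero => simpa using hx
  | succ m ih =>
    rw [pow_succ', Module.End.mul_apply, Nat.cast_succ, ← sub_sub]
    exact M.maps _ (mem_map_of_mem ih)

lemma t_pow_length_eq_zero : M.t ^ M.length = 0 := by
  have h := LinearMap.aeval_self_charpoly M.t
  rwa [IsNilpotent.charpoly_eq_X_pow_finrank M.nilpotent, map_pow, Polynomial.aeval_X] at h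

lemma exists_mem_grading_apply_ne_zero {g : Module.End k M.carrier} (hg : g ≠ 0) :
    ∃ i, ∃ x ∈ M.grading i, g x ≠ 0 := by
  by_contra! h
  refine hg (LinearMap.ker_eq_top.mp (top_le_iff.mp ?_))
  rw [← M.total]
  exact iSup_le fun i x hx => h i x hx

lemma exists_dual_apply_ne_zero_of_mem_grading {j : ZMod n} {v : M.carrier}
    (hv : v ∈ M.grading j) (hv0 : v ≠ 0) :
    ∃ ξ : Module.Dual k M.carrier, ξ v ≠ 0 ∧ ∀ j' ≠ j, ∀ z ∈ M.grading j', ξ z = 0 := by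
  have hvp : v ∉ ⨆ (j') (_ : j' ≠ j), M.grading j' := fun h =>
    hv0 (disjoint_def.mp (M.indep j) _ hv h)
  obtain ⟨ξ, hξv, hξ⟩ := exists_dual_map_eq_bot_of_notMem hvp inferInstance
  exact ⟨ξ, hξv, fun j' hj' z hz =>
    LinearMap.le_ker_iff_map.mpr hξ (mem_iSup_of_mem j' (mem_iSup_of_mem hj' hz))⟩

lemma nontrivial_of_dim_ne_zero (h : M.dim ≠ 0) : Nontrivial M.carrier := by
  obtain ⟨i, hi⟩ := Function.ne_iff.mp h
  have : M.grading i ≠ ⊥ := fun hb => hi (by simp [dim, hb])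
  obtain ⟨v, -, hv⟩ := exists_mem_ne_zero_of_ne_bot this
  exact ⟨v, 0, hv⟩

lemma subDim_top : M.subDim ⊤ = M.dim := by
  funext i
  simp only [subDim, dim]
  rw [inf_top_eq]

lemma subDim_bot : M.subDim ⊥ = 0 := by
  funext i
  simp [subDim]

lemma subDim_ne_zero {U : Submodule k M.carrier} (hU : M.IsSubRep U) (h : U ≠ ⊥) :
    M.subDim U ≠ 0 := by
  refine fun h0 => h ?_
  rw [← hU.2]
  exact iSup_eq_bot.mpr fun i => by simpa [subDim] using congrFun h0 i

lemma grading_eq_span_image_basis {ι : Type*} (b : Basis ι k M.carrier) (deg : ι → ZMod n)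
    (hb : ∀ j, b j ∈ M.grading (deg j)) (m : ZMod n) :
    M.grading m = span k (b '' {j | deg j = m}) := by
  refine (congrFun (M.iSupIndep_grading.eq_of_le_of_iSup_le
    (f := fun m => span k (b '' {j | deg j = m})) (fun m => span_le.mpr ?_) ?_) m).symm
  · rintro _ ⟨j, rfl, rfl⟩
    exact hb j
  · rw [M.total, ← b.span_eq, span_le]
    rintro _ ⟨j, rfl⟩
    exact mem_iSup_of_mem (deg j) (subset_span ⟨j, rfl, rfl⟩)

def homogeneousCore (K : Submodule k M.carrier) : Submodule k M.carrier :=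
  ⨆ j, M.grading j ⊓ K

lemma grading_inf_homogeneousCore (K : Submodule k M.carrier) (j : ZMod n) :
    M.grading j ⊓ M.homogeneousCore K = M.grading j ⊓ K :=
  (congrFun ((M.iSupIndep_grading.mono fun _ => inf_le_left).eq_of_le_of_iSup_le
    (f := fun j => M.grading j ⊓ K) (g := fun j => M.grading j ⊓ M.homogeneousCore K)
    (fun j => le_inf inf_le_left (le_iSup (fun j => M.grading j ⊓ K) j))
    (iSup_le fun _ => inf_le_right)) j).symm

lemma isSubRep_homogeneousCore {K : Submodule k M.carrier} (hK : K.map M.t ≤ K) :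
    M.IsSubRep (M.homogeneousCore K) := by
  refine ⟨?_, iSup_congr (M.grading_inf_homogeneousCore K)⟩
  rw [homogeneousCore, Submodule.map_iSup]
  exact iSup_le fun j => (map_inf_le _).trans <|
    (inf_le_inf (M.maps j) hK).trans (le_iSup (fun j => M.grading j ⊓ K) (j - 1))

def IsRepEnd (f : Module.End k M.carrier) : Prop :=
  Commute f M.t ∧ ∀ i, (M.grading i).map f ≤ M.grading i

variable {M} {f : Module.End k M.carrier}

lemma IsRepEnd.map_ker_le (hf : M.IsRepEnd f) : (LinearMap.ker f).map M.t ≤ LinearMap.ker f := by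
  rintro _ ⟨z, hz, rfl⟩
  rw [LinearMap.mem_ker, ← Module.End.mul_apply, hf.1.eq, Module.End.mul_apply,
    LinearMap.mem_ker.mp hz, map_zero]

lemma IsRepEnd.grading_inf_range (hf : M.IsRepEnd f) (j : ZMod n) :
    M.grading j ⊓ LinearMap.range f = (M.grading j).map f := by
  refine (congrFun ((M.iSupIndep_grading.mono fun _ => inf_le_left).eq_of_le_of_iSup_le
    (fun j => le_inf (hf.2 j) (LinearMap.map_le_range)) ?_) j).symm
  rw [LinearMap.range_eq_map, ← M.total, Submodule.map_iSup]
  exact iSup_le fun j => inf_le_right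

lemma IsRepEnd.isSubRep_range (hf : M.IsRepEnd f) : M.IsSubRep (LinearMap.range f) := by
  refine ⟨?_, ?_⟩
  · rintro _ ⟨_, ⟨z, rfl⟩, rfl⟩
    exact ⟨M.t z, by rw [← Module.End.mul_apply, hf.1.eq, Module.End.mul_apply]⟩
  · simp_rw [hf.grading_inf_range]
    rw [← Submodule.map_iSup, M.total, LinearMap.range_eq_map]

lemma IsRepEnd.subDim_range_add_subDim_homogeneousCore_ker (hf : M.IsRepEnd f) :
    M.subDim (LinearMap.range f) + M.subDim (M.homogeneousCore (LinearMap.ker f)) = M.dim := by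
  funext j
  simp only [subDim, dim, Pi.add_apply]
  rw [hf.grading_inf_range, M.grading_inf_homogeneousCore]
  exact_mod_cast finrank_map_add_finrank_inf_ker f (M.grading j)

lemma cyclicEnd_mem_grading {ξ : Module.Dual k M.carrier} {x : M.carrier} {i : ZMod n} {s : ℕ}
    (hx : x ∈ M.grading i) (hξ : ∀ j ≠ i - s, ∀ z ∈ M.grading j, ξ z = 0)
    {j : ZMod n} {z : M.carrier} (hz : z ∈ M.grading j) :
    cyclicEnd M.t ξ x s z ∈ M.grading j := by
  rw [cyclicEnd_apply]
  refine sum_mem fun p hp => ?_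
  by_cases hdeg : j - p.1 = i - s
  · have hs : ((p.1 + p.2 : ℕ) : ZMod n) = s := by rw [HasAntidiagonal.mem_antidiagonal.mp hp]
    have hj : i - p.2 = j := by push_cast at hs; linear_combination -hdeg - hs
    exact smul_mem _ _ (hj ▸ M.pow_mem_grading hx p.2)
  · rw [hξ _ hdeg _ (M.pow_mem_grading hz p.1), zero_smul]
    exact zero_mem _

variable (M) in
/-- In the notation of the paper, `M ≅ R(i - r + 1, r)`. -/
def HasCyclicBasis (i : ZMod n) (r : ℕ) : Prop :=
  ∃ x ∈ M.grading i, LinearIndependent k (fun j : Fin r => (M.t ^ (j : ℕ)) x) ∧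
    ⊤ ≤ span k (Set.range fun j : Fin r => (M.t ^ (j : ℕ)) x)

lemma HasCyclicBasis.of_top_le_span {i : ZMod n} {x : M.carrier} {s : ℕ} (hx : x ∈ M.grading i)
    (hs : M.t ^ s ≠ 0) (hsp : ⊤ ≤ span k (Set.range fun b : Fin (s + 1) => (M.t ^ (b : ℕ)) x)) :
    M.HasCyclicBasis i (s + 1) := by
  have hlen : M.length = s + 1 := by
    refine le_antisymm ((finrank_le_of_span_eq_top (top_le_iff.mp hsp)).trans (by simp)) ?_
    by_contra! h
    exact hs (pow_eq_zero_of_le (by omega) M.t_pow_length_eq_zero)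
  refine ⟨x, hx, linearIndependent_of_top_le_span_of_card_eq_finrank hsp ?_, hsp⟩
  rw [Fintype.card_fin]
  exact hlen.symm

lemma HasCyclicBasis.length_eq {i : ZMod n} {r : ℕ} (h : M.HasCyclicBasis i r) :
    M.length = r := by
  obtain ⟨x, -, hli, hsp⟩ := h
  rw [length, finrank_eq_card_basis (Basis.mk hli hsp), Fintype.card_fin]

lemma HasCyclicBasis.repIso {N : NilpRep k n} {i : ZMod n} {r : ℕ} (hM : M.HasCyclicBasis i r)
    (hN : N.HasCyclicBasis i r) : RepIso M N := by
  have hlenM := hM.length_eq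
  have hlenN := hN.length_eq
  obtain ⟨x, hx, hliM, hspM⟩ := hM
  obtain ⟨y, hy, hliN, hspN⟩ := hN
  let bM := Basis.mk hliM hspM
  let bN := Basis.mk hliN hspN
  have hbM (j : Fin r) : bM j = (M.t ^ (j : ℕ)) x := Basis.mk_apply hliM hspM j
  have hbN (j : Fin r) : bN j = (N.t ^ (j : ℕ)) y := Basis.mk_apply hliN hspN j
  have he (j : ℕ) : bM.equiv bN (Equiv.refl _) ((M.t ^ j) x) = (N.t ^ j) y := by
    rcases lt_or_ge j r with hj | hj
    · rw [← hbM ⟨j, hj⟩, Basis.equiv_apply, Equiv.refl_apply, hbN]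
    · rw [pow_eq_zero_of_le (hlenM ▸ hj) M.t_pow_length_eq_zero,
        pow_eq_zero_of_le (hlenN ▸ hj) N.t_pow_length_eq_zero, LinearMap.zero_apply, map_zero,
        LinearMap.zero_apply]
  have hdeg {P : NilpRep k n} {w : P.carrier} (hw : w ∈ P.grading i) (j : Fin r) :
      (P.t ^ (j : ℕ)) w ∈ P.grading (i - (j : ℕ)) := P.pow_mem_grading hw j
  refine ⟨bM.equiv bN (Equiv.refl _), fun z => LinearMap.congr_fun (bM.ext
    (f₁ := (bM.equiv bN (Equiv.refl _)).toLinearMap ∘ₗ M.t)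
    (f₂ := N.t ∘ₗ bM.equiv bN (Equiv.refl _)) fun j => ?_) z, fun m => ?_⟩
  · rw [LinearMap.comp_apply, LinearMap.comp_apply, LinearEquiv.coe_coe, hbM,
      ← Module.End.mul_apply, ← pow_succ', he, he, pow_succ', Module.End.mul_apply]
  · rw [M.grading_eq_span_image_basis bM _ fun j => hbM j ▸ hdeg hx j,
      N.grading_eq_span_image_basis bN _ fun j => hbN j ▸ hdeg hy j, map_span, ← Set.image_comp]
    exact congrArg (span k) (Set.image_congr fun j _ => by
      rw [Function.comp_apply, LinearEquiv.coe_coe, Basis.equiv_apply, Equiv.refl_apply])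

end NilpRep

namespace IsStable

variable {Z : (ZMod n → ℤ) → ℂ} {M : NilpRep k n}

lemma subDim_add_ne_dim (hZ : IsStabilityFunction n Z) (hM : IsStable Z M)
    {U W : Submodule k M.carrier} (hU : M.IsSubRep U) (hW : M.IsSubRep W) (hU0 : U ≠ ⊥)
    (hW0 : W ≠ ⊥) : M.subDim U + M.subDim W ≠ M.dim := by
  intro h
  have hU1 : U ≠ ⊤ := by
    rintro rfl
    rw [M.subDim_top, add_eq_left] at h
    exact M.subDim_ne_zero hW hW0 h
  have hW1 : W ≠ ⊤ := by
    rintro rfl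
    rw [M.subDim_top, add_eq_right] at h
    exact M.subDim_ne_zero hU hU0 h
  obtain ⟨hZU, hargU, -⟩ :=
    hZ.2 (M.subDim U) (fun _ => Int.natCast_nonneg _) (M.subDim_ne_zero hU hU0)
  obtain ⟨hZW, hargW, -⟩ :=
    hZ.2 (M.subDim W) (fun _ => Int.natCast_nonneg _) (M.subDim_ne_zero hW hW0)
  obtain ⟨-, -, hargM⟩ := hZ.2 M.dim (fun _ => Int.natCast_nonneg _) hM.1
  have hadd : Z (M.subDim U) + Z (M.subDim W) = Z M.dim := by rw [← hZ.1, h]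
  have hmax := Complex.arg_add_le_max hZU hZW hargU hargW (hadd ▸ hargM)
  rw [hadd] at hmax
  exact (max_lt (hM.2 U hU hU0 hU1) (hM.2 W hW hW0 hW1)).not_ge hmax

lemma eq_zero_or_surjective (hZ : IsStabilityFunction n Z) (hM : IsStable Z M)
    {f : Module.End k M.carrier} (hf : M.IsRepEnd f) : f = 0 ∨ Function.Surjective f := by
  by_contra! h
  obtain ⟨hf0, hsurj⟩ := h
  have hU0 : LinearMap.range f ≠ ⊥ := fun h => hf0 (LinearMap.range_eq_bot.mp h)
  have hU1 : LinearMap.range f ≠ ⊤ := fun h => hsurj (LinearMap.range_eq_top.mp h)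
  have hdim := hf.subDim_range_add_subDim_homogeneousCore_ker
  by_cases hW0 : M.homogeneousCore (LinearMap.ker f) = ⊥
  · rw [hW0, M.subDim_bot, add_zero] at hdim
    exact (hM.2 _ hf.isSubRep_range hU0 hU1).ne (by rw [hdim])
  · exact hM.subDim_add_ne_dim hZ hf.isSubRep_range (M.isSubRep_homogeneousCore hf.map_ker_le)
      hU0 hW0 hdim

lemma t_pow_eq_zero (hZ : IsStabilityFunction n Z) (hM : IsStable Z M) : M.t ^ n = 0 := by
  have := M.nontrivial_of_dim_ne_zero hM.1
  have hrep : M.IsRepEnd (M.t ^ n) := by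
    refine ⟨(Commute.refl _).pow_left n, fun i => ?_⟩
    rintro _ ⟨z, hz, rfl⟩
    simpa using M.pow_mem_grading hz n
  refine (hM.eq_zero_or_surjective hZ hrep).resolve_right fun hs => ?_
  obtain ⟨N, hN⟩ := M.nilpotent
  have hsN : Function.Surjective ((M.t ^ n) ^ N) := by
    rw [Module.End.coe_pow]
    exact hs.iterate N
  rw [← pow_mul, mul_comm, pow_mul, hN, zero_pow (NeZero.ne n)] at hsN
  obtain ⟨v, hv⟩ := exists_ne (0 : M.carrier)
  obtain ⟨w, hw⟩ := hsN v
  exact hv hw.symm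

lemma exists_hasCyclicBasis (hZ : IsStabilityFunction n Z) (hM : IsStable Z M) :
    ∃ i r, r ≤ n ∧ M.HasCyclicBasis i r := by
  have := M.nontrivial_of_dim_ne_zero hM.1
  obtain ⟨s, hs⟩ := Nat.exists_eq_add_one.mpr
    (pos_nilpotencyClass_iff.mpr (M.nilpotent : IsNilpotent M.t))
  obtain ⟨hts1, hts⟩ := nilpotencyClass_eq_succ_iff.mp hs
  have hsn : s + 1 ≤ n := by
    by_contra! h
    exact hts (pow_eq_zero_of_le (by omega) (hM.t_pow_eq_zero hZ))
  obtain ⟨i, x, hx, hv⟩ := M.exists_mem_grading_apply_ne_zero hts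
  obtain ⟨ξ, hξv, hξ⟩ := M.exists_dual_apply_ne_zero_of_mem_grading (M.pow_mem_grading hx s) hv
  have hrep : M.IsRepEnd (cyclicEnd M.t ξ x s) :=
    ⟨(commute_cyclicEnd hts1).symm, fun j => by
      rintro _ ⟨z, hz, rfl⟩
      exact NilpRep.cyclicEnd_mem_grading hx hξ hz⟩
  have hne : cyclicEnd M.t ξ x s ≠ 0 := fun h => by
    simpa [h, hξv, hv] using (cyclicEnd_apply_pow_self (ξ := ξ) (x := x) hts1).symm
  have hsurj := (hM.eq_zero_or_surjective hZ hrep).resolve_left hne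
  exact ⟨i, s + 1, hsn,
    .of_top_le_span hx hts ((LinearMap.range_eq_top.mpr hsurj).ge.trans range_cyclicEnd_le)⟩

end IsStable

lemma exists_list_representatives {α ι : Type*} [Finite ι] {P : α → Prop} (c : ι → α → Prop)
    {R : α → α → Prop} (hP : ∀ a, P a → ∃ i, c i a) (hR : ∀ i a b, c i a → c i b → R a b) :
    ∃ L : List α, ∀ a, P a → ∃ b ∈ L, R a b := by
  classical
  have := Fintype.ofFinite ι
  refine ⟨(Finset.univ : Finset {i // ∃ a, c i a}).toList.map fun i => i.2.choose, fun a ha => ?_⟩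
  obtain ⟨i, hi⟩ := hP a ha
  have hex : ∃ a, c i a := ⟨a, hi⟩
  exact ⟨hex.choose, List.mem_map.mpr ⟨⟨i, hex⟩, by simp, rfl⟩, hR i _ _ hi hex.choose_spec⟩

/-- Every `Z`-stable object of `𝒯ₙ` has length at most `n`, and there are only finitely
many stable objects up to isomorphism. -/
theorem stmt_6 (k : Type) [Field k] (n : ℕ) [NeZero n]
    (Z : (ZMod n → ℤ) → ℂ) (hZ : IsStabilityFunction n Z) :
    (∀ M : NilpRep k n, IsStable Z M → M.length ≤ n) ∧
    ∃ L : List (NilpRep k n), ∀ M : NilpRep k n, IsStable Z M →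
      ∃ N ∈ L, NilpRep.RepIso M N := by
  refine ⟨fun M hM => ?_, ?_⟩
  · obtain ⟨i, r, hrn, hcyc⟩ := hM.exists_hasCyclicBasis hZ
    exact hcyc.length_eq ▸ hrn
  · refine exists_list_representatives
      (fun (p : ZMod n × Fin (n + 1)) (M : NilpRep k n) => M.HasCyclicBasis p.1 p.2)
      (fun M hM => ?_) fun p M N hM hN => hM.repIso hN
    obtain ⟨i, r, hrn, hcyc⟩ := hM.exists_hasCyclicBasis hZ
    exact ⟨(i, ⟨r, by omega⟩), hcyc⟩
end

section
/- The category 𝒯ₙ of nilpotent representations of the cyclic quiver (n ≥ 1) admits no completely discrete stability function; that is, for every stability function Z there exists a phase μ such that the subcategory of semistable objects of phase μ is nonzero and not semisimple. -/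
variable {k : Type} [Field k] {n : ℕ} [NeZero n]

open Complex Module

def stabilityHalfPlane : Set ℂ := {z | z ≠ 0 ∧ 0 ≤ z.arg ∧ z.arg < Real.pi}

lemma mem_stabilityHalfPlane_iff {z : ℂ} :
    z ∈ stabilityHalfPlane ↔ 0 < z.im ∨ (z.im = 0 ∧ 0 < z.re) := by
  simp only [stabilityHalfPlane, Set.mem_ofPred_eq, arg_nonneg_iff, arg_lt_pi_iff, ne_eq,
    Complex.ext_iff, zero_re, zero_im, not_and]
  constructor
  · rintro ⟨hz, him, hre | him'⟩
    · rcases him.lt_or_eq with h | h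
      · exact .inl h
      · exact .inr ⟨h.symm, hre.lt_of_ne fun h' => hz h'.symm h.symm⟩
    · exact .inl (him.lt_of_ne (Ne.symm him'))
  · rintro (h | ⟨h, h'⟩)
    · exact ⟨fun _ => h.ne', h.le, .inr h.ne'⟩
    · exact ⟨fun h'' => absurd h'' h'.ne', h.ge, .inl h'.le⟩

lemma add_mem_stabilityHalfPlane {z w : ℂ} (hz : z ∈ stabilityHalfPlane)
    (hw : w ∈ stabilityHalfPlane) : z + w ∈ stabilityHalfPlane := by
  rw [mem_stabilityHalfPlane_iff] at *
  simp only [add_im, add_re]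
  rcases hz with hz | ⟨hz, hz'⟩ <;> rcases hw with hw | ⟨hw, hw'⟩
  · exact .inl (by linarith)
  · exact .inl (by linarith)
  · exact .inl (by linarith)
  · exact .inr ⟨by linarith, by linarith⟩

/-- On the half-plane, comparing arguments amounts to the sign of the cross product,
`‖z‖ ‖w‖ sin (arg w - arg z)`. -/
lemma arg_le_arg_iff_of_mem_stabilityHalfPlane {z w : ℂ} (hz : z ∈ stabilityHalfPlane)
    (hw : w ∈ stabilityHalfPlane) : z.arg ≤ w.arg ↔ 0 ≤ z.re * w.im - z.im * w.re := by
  have hcross : z.re * w.im - z.im * w.re = ‖z‖ * ‖w‖ * Real.sin (w.arg - z.arg) := by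
    rw [Real.sin_sub, ← norm_mul_cos_arg z, ← norm_mul_sin_arg z, ← norm_mul_cos_arg w,
      ← norm_mul_sin_arg w]
    ring
  have hnorm : 0 < ‖z‖ * ‖w‖ := mul_pos (norm_pos_iff.mpr hz.1) (norm_pos_iff.mpr hw.1)
  rw [hcross]
  constructor
  · intro h
    exact mul_nonneg hnorm.le
      (Real.sin_nonneg_of_nonneg_of_le_pi (by linarith) (by linarith [hw.2.2, hz.2.1]))
  · intro h
    by_contra! hlt
    have := Real.sin_neg_of_neg_of_neg_pi_lt (sub_neg.mpr hlt) (by linarith [hz.2.2, hw.2.1])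
    nlinarith

lemma arg_add_le_max {z w : ℂ} (hz : z ∈ stabilityHalfPlane) (hw : w ∈ stabilityHalfPlane) :
    (z + w).arg ≤ max z.arg w.arg := by
  have hzw := add_mem_stabilityHalfPlane hz hw
  rcases le_total z.arg w.arg with h | h
  · rw [arg_le_arg_iff_of_mem_stabilityHalfPlane hz hw] at h
    refine le_max_of_le_right ((arg_le_arg_iff_of_mem_stabilityHalfPlane hzw hw).mpr ?_)
    simp only [add_re, add_im]
    linarith
  · rw [arg_le_arg_iff_of_mem_stabilityHalfPlane hw hz] at h
    refine le_max_of_le_left ((arg_le_arg_iff_of_mem_stabilityHalfPlane hzw hz).mpr ?_)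
    simp only [add_re, add_im]
    linarith

lemma min_le_arg_add {z w : ℂ} (hz : z ∈ stabilityHalfPlane) (hw : w ∈ stabilityHalfPlane) :
    min z.arg w.arg ≤ (z + w).arg := by
  have hzw := add_mem_stabilityHalfPlane hz hw
  rcases le_total z.arg w.arg with h | h
  · rw [arg_le_arg_iff_of_mem_stabilityHalfPlane hz hw] at h
    refine min_le_of_left_le ((arg_le_arg_iff_of_mem_stabilityHalfPlane hz hzw).mpr ?_)
    simp only [add_re, add_im]
    linarith
  · rw [arg_le_arg_iff_of_mem_stabilityHalfPlane hw hz] at h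
    refine min_le_of_right_le ((arg_le_arg_iff_of_mem_stabilityHalfPlane hw hzw).mpr ?_)
    simp only [add_re, add_im]
    linarith

section PhaseTie

variable {φ : ZMod n → ℕ → ℂ}

lemma exists_forall_arg_le (hφ : ∀ b m, 0 < m → φ b m ∈ stabilityHalfPlane)
    (hadd : ∀ b m m', φ b (m + m') = φ b m + φ (b + m) m') (b : ZMod n) :
    ∃ j, 0 < j ∧ ∀ m, 0 < m → (φ b m).arg ≤ (φ b j).arg := by
  obtain ⟨j, hj, hjmax⟩ := (Finset.Icc 1 n).exists_max_image (fun m => (φ b m).arg)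
    ⟨n, Finset.mem_Icc.mpr ⟨Nat.one_le_iff_ne_zero.mpr (NeZero.ne n), le_rfl⟩⟩
  refine ⟨j, (Finset.mem_Icc.mp hj).1, fun m hm => ?_⟩
  induction m using Nat.strong_induction_on with
  | _ m ih =>
    rcases le_or_gt m n with hmn | hnm
    · exact hjmax m (Finset.mem_Icc.mpr ⟨hm, hmn⟩)
    · have hperiod : φ b m = φ b n + φ b (m - n) := by
        have := hadd b n (m - n)
        rwa [ZMod.natCast_self, add_zero, Nat.add_sub_cancel' hnm.le] at this
      have hn := NeZero.pos n
      rw [hperiod]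
      exact (arg_add_le_max (hφ b n hn) (hφ b _ (by omega))).trans
        (max_le (ih n hnm hn) (ih _ (by omega) (by omega)))

theorem exists_prefix_arg_eq_max_arg (hφ : ∀ b m, 0 < m → φ b m ∈ stabilityHalfPlane)
    (hadd : ∀ b m m', φ b (m + m') = φ b m + φ (b + m) m') :
    ∃ b j ℓ, 0 < j ∧ j < ℓ ∧ (φ b j).arg = (φ b ℓ).arg ∧
      ∀ m, 0 < m → (φ b m).arg ≤ (φ b ℓ).arg := by
  choose J hJpos hJmax using exists_forall_arg_le hφ hadd
  obtain ⟨b, hb⟩ := Finite.exists_min fun b => (φ b (J b)).arg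
  have htie : (φ b (J b + J (b + J b))).arg = (φ b (J b)).arg := by
    refine le_antisymm (hJmax b _ (by have := hJpos b; omega)) ?_
    have := min_le_arg_add (hφ b _ (hJpos b)) (hφ (b + J b) _ (hJpos (b + J b)))
    rwa [← hadd, min_eq_left (hb _)] at this
  refine ⟨b, J b, J b + J (b + J b), hJpos b, by have := hJpos (b + J b); omega, htie.symm,
    fun m hm => htie ▸ hJmax b m hm⟩

end PhaseTie

def intervalClass {n : ℕ} (b : ZMod n) (m : ℕ) : ZMod n → ℤ :=
  ∑ s ∈ Finset.range m, Pi.single (b + (s : ZMod n)) 1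

lemma intervalClass_add {n : ℕ} (b : ZMod n) (m m' : ℕ) :
    intervalClass b (m + m') = intervalClass b m + intervalClass (b + (m : ZMod n)) m' := by
  simp only [intervalClass, Finset.sum_range_add, Nat.cast_add, add_assoc]

lemma intervalClass_apply {n : ℕ} (b : ZMod n) (m : ℕ) (i : ZMod n) :
    intervalClass b m i = ((Finset.range m).filter fun s : ℕ => b + (s : ZMod n) = i).card := by
  simp [intervalClass, Finset.sum_apply, Pi.single_apply, eq_comm]

lemma intervalClass_nonneg {n : ℕ} (b : ZMod n) (m : ℕ) (i : ZMod n) :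
    0 ≤ intervalClass b m i := by
  rw [intervalClass_apply]
  exact Nat.cast_nonneg _

lemma intervalClass_ne_zero {n : ℕ} (b : ZMod n) {m : ℕ} (hm : 0 < m) :
    intervalClass b m ≠ 0 := by
  intro h
  have := congrFun h b
  rw [intervalClass_apply, Pi.zero_apply, Nat.cast_eq_zero, Finset.card_eq_zero,
    Finset.filter_eq_empty_iff] at this
  exact this (Finset.mem_range.mpr hm) (by simp)

namespace Pi

variable {R η : Type*} [Semiring R] [Finite η]

lemma spanSubset_inf (s t : Set η) :
    spanSubset R s ⊓ spanSubset R t = spanSubset R (s ∩ t) := by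
  ext v
  simp only [Submodule.mem_inf, mem_spanSubset_iff, Set.mem_inter_iff, not_and_or]
  exact ⟨fun h i hi => hi.elim (h.1 i) (h.2 i), fun h => ⟨fun i hi => h i (.inl hi),
    fun i hi => h i (.inr hi)⟩⟩

lemma iSup_spanSubset {ι : Sort*} (s : ι → Set η) :
    ⨆ i, spanSubset R (s i) = spanSubset R (⋃ i, s i) := by
  simp only [spanSubset, Set.image_iUnion, Submodule.span_iUnion]

lemma spanSubset_empty : spanSubset R (∅ : Set η) = ⊥ := by
  simp [spanSubset]

lemma spanSubset_univ : spanSubset R (Set.univ : Set η) = ⊤ := by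
  simp [spanSubset, Set.image_univ]

lemma spanSubset_mono {s t : Set η} (h : s ⊆ t) : spanSubset R s ≤ spanSubset R t :=
  Submodule.span_mono (Set.image_mono h)

lemma finrank_spanSubset [Nontrivial R] [StrongRankCondition R] (s : Set η) :
    finrank R (spanSubset R s) = Nat.card s := by
  classical
  have := Fintype.ofFinite η
  rw [spanSubset, Set.image_eq_range, finrank_span_eq_card, Nat.card_eq_fintype_card]
  exact (Pi.basisFun R η).linearIndependent.comp _ Subtype.val_injective

lemma disjoint_spanSubset {s t : Set η} (h : Disjoint s t) :
    Disjoint (spanSubset R s) (spanSubset R t) := by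
  refine _root_.disjoint_iff.mpr ?_
  rw [spanSubset_inf, Set.disjoint_iff_inter_eq_empty.mp h, spanSubset_empty]

end Pi

lemma Module.End.le_ker_pow_finrank_of_isNilpotent {K V : Type*} [DivisionRing K]
    [AddCommGroup V] [Module K V] [FiniteDimensional K V] {f : End K V} (hf : IsNilpotent f)
    {U : Submodule K V} (hU : ∀ x ∈ U, f x ∈ U) : U ≤ LinearMap.ker (f ^ finrank K U) := by
  obtain ⟨N, hN⟩ := Module.End.isNilpotent.restrict hU hf
  have hker : LinearMap.ker (f.restrict hU ^ N) ≤ LinearMap.ker (f.restrict hU ^ finrank K U) :=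
    ker_pow_le_ker_pow_finrank _ N
  rw [hN, LinearMap.ker_zero, top_le_iff, LinearMap.ker_eq_top] at hker
  intro x hx
  have := congrArg Subtype.val (LinearMap.congr_fun hker ⟨x, hx⟩)
  rwa [Module.End.pow_restrict, LinearMap.restrict_apply] at this

section Shift

variable (R : Type*) [Semiring R] (ℓ : ℕ)

def shiftDown : Module.End R (Fin ℓ → R) where
  toFun x r := if h : (r : ℕ) + 1 < ℓ then x ⟨r + 1, h⟩ else 0
  map_add' x y := by
    funext r
    by_cases h : (r : ℕ) + 1 < ℓ <;> simp [h]
  map_smul' c x := by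
    funext r
    by_cases h : (r : ℕ) + 1 < ℓ <;> simp [h]

variable {R ℓ}

lemma shiftDown_pow_apply (N : ℕ) (x : Fin ℓ → R) (r : Fin ℓ) :
    (shiftDown R ℓ ^ N) x r = if h : (r : ℕ) + N < ℓ then x ⟨r + N, h⟩ else 0 := by
  induction N generalizing x r with
  | zero => simp
  | succ N ih =>
    rw [pow_succ, Module.End.mul_apply, ih]
    simp only [shiftDown, LinearMap.coe_mk, AddHom.coe_mk]
    by_cases h : (r : ℕ) + N + 1 < ℓ
    · rw [dif_pos (by omega), dif_pos h, dif_pos (by omega)]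
      simp only [add_assoc]
    · rw [dif_neg (show ¬(r : ℕ) + (N + 1) < ℓ by omega)]
      split_ifs <;> rfl

lemma ker_shiftDown_pow (j : ℕ) :
    LinearMap.ker (shiftDown R ℓ ^ j) = Pi.spanSubset R {r : Fin ℓ | (r : ℕ) < j} := by
  ext x
  simp only [LinearMap.mem_ker, Pi.mem_spanSubset_iff, Set.mem_ofPred_eq, not_lt, funext_iff,
    shiftDown_pow_apply, Pi.zero_apply]
  constructor
  · intro h r hr
    simpa [Nat.sub_add_cancel hr] using h ⟨r - j, by omega⟩
  · intro h r
    split_ifs with hr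
    · exact h _ (by simp)
    · rfl

lemma shiftDown_pow_length : shiftDown R ℓ ^ ℓ = 0 := by
  ext x r
  simp [shiftDown_pow_apply]

lemma ker_shiftDown_pow_ne_bot [Nontrivial R] {j : ℕ} (hℓ : 0 < ℓ) (hj : 0 < j) :
    LinearMap.ker (shiftDown R ℓ ^ j) ≠ ⊥ := by
  rw [ker_shiftDown_pow, Submodule.ne_bot_iff]
  refine ⟨Pi.single ⟨0, hℓ⟩ 1, Pi.mem_spanSubset_iff.mpr fun r hr => ?_, by simp⟩
  exact Pi.single_eq_of_ne (by rintro rfl; exact hr hj) _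

lemma ker_shiftDown_pow_ne_top [Nontrivial R] {j : ℕ} (hj : j < ℓ) :
    LinearMap.ker (shiftDown R ℓ ^ j) ≠ ⊤ := by
  rw [ker_shiftDown_pow]
  intro h
  have := Pi.mem_spanSubset_iff.mp (h ▸ Submodule.mem_top : Pi.single ⟨j, hj⟩ (1 : R) ∈ _)
    ⟨j, hj⟩ (lt_irrefl j)
  simp at this

end Shift

section Invariant

variable {K : Type*} [DivisionRing K] {ℓ : ℕ}

lemma exists_eq_ker_shiftDown_pow {U : Submodule K (Fin ℓ → K)}
    (hU : U.map (shiftDown K ℓ) ≤ U) : ∃ d, U = LinearMap.ker (shiftDown K ℓ ^ d) := by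
  have hle := Module.End.le_ker_pow_finrank_of_isNilpotent (U := U) ⟨ℓ, shiftDown_pow_length⟩
    fun x hx => Submodule.map_le_iff_le_comap.mp hU hx
  refine ⟨_, Submodule.eq_of_le_of_finrank_le hle ?_⟩
  rw [ker_shiftDown_pow, Pi.finrank_spanSubset]
  refine (Nat.card_le_card_of_injective (fun r => (⟨r.1, r.2⟩ : Fin (finrank K U))) ?_).trans
    (Nat.card_fin _).le
  intro r s h
  simp only [Fin.mk.injEq] at h
  exact Subtype.ext (Fin.ext h)

lemma le_total_of_map_shiftDown_le {U V : Submodule K (Fin ℓ → K)}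
    (hU : U.map (shiftDown K ℓ) ≤ U) (hV : V.map (shiftDown K ℓ) ≤ V) : U ≤ V ∨ V ≤ U := by
  obtain ⟨d, rfl⟩ := exists_eq_ker_shiftDown_pow hU
  obtain ⟨e, rfl⟩ := exists_eq_ker_shiftDown_pow hV
  simp only [ker_shiftDown_pow]
  rcases le_total d e with h | h
  · exact .inl (Pi.spanSubset_mono fun r hr => lt_of_lt_of_le hr h)
  · exact .inr (Pi.spanSubset_mono fun r hr => lt_of_lt_of_le hr h)

end Invariant

section Uniserial

variable (k)

noncomputable abbrev uniserial (b : ZMod n) (ℓ : ℕ) : NilpRep k n where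
  carrier := Fin ℓ → k
  grading i := Pi.spanSubset k {r : Fin ℓ | b + ((r : ℕ) : ZMod n) = i}
  t := shiftDown k ℓ
  indep i := by
    simp only [Pi.iSup_spanSubset]
    refine Pi.disjoint_spanSubset (Set.disjoint_left.mpr ?_)
    simp only [Set.mem_ofPred_eq, Set.mem_iUnion]
    rintro r hr ⟨j, hj, hr'⟩
    exact hj (hr'.symm.trans hr)
  total := by
    rw [Pi.iSup_spanSubset, ← Pi.spanSubset_univ]
    congr
    exact Set.eq_univ_of_forall fun r => Set.mem_iUnion.mpr ⟨_, rfl⟩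
  maps i := by
    rw [Submodule.map_le_iff_le_comap]
    intro x hx
    rw [Submodule.mem_comap, Pi.mem_spanSubset_iff] at *
    intro r hr
    simp only [shiftDown, LinearMap.coe_mk, AddHom.coe_mk]
    split_ifs with h
    · refine hx _ fun hi => hr ?_
      simp only [Set.mem_ofPred_eq] at hi ⊢
      rw [← hi]
      push_cast
      ring
    · rfl
  nilpotent := ⟨ℓ, shiftDown_pow_length⟩

variable {k}

lemma uniserial_isSubRep_ker (b : ZMod n) (ℓ j : ℕ) :
    (uniserial k b ℓ).IsSubRep (LinearMap.ker (shiftDown k ℓ ^ j)) := by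
  refine ⟨?_, ?_⟩
  · rw [Submodule.map_le_iff_le_comap]
    intro x hx
    change (shiftDown k ℓ ^ j) (shiftDown k ℓ x) = 0
    rw [← Module.End.mul_apply, ← pow_succ, pow_succ', Module.End.mul_apply,
      LinearMap.mem_ker.mp hx, map_zero]
  · change ⨆ i, Pi.spanSubset k _ ⊓ _ = _
    simp only [ker_shiftDown_pow, Pi.spanSubset_inf, Pi.iSup_spanSubset, ← Set.iUnion_inter]
    congr
    exact Set.inter_eq_right.mpr fun r _ => Set.mem_iUnion.mpr ⟨_, rfl⟩

lemma uniserial_subDim_ker (b : ZMod n) {ℓ j : ℕ} (hj : j ≤ ℓ) :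
    (uniserial k b ℓ).subDim (LinearMap.ker (shiftDown k ℓ ^ j)) = intervalClass b j := by
  funext i
  change (finrank k ↥(Pi.spanSubset k _ ⊓ _) : ℤ) = _
  rw [ker_shiftDown_pow, Pi.spanSubset_inf, Pi.finrank_spanSubset, intervalClass_apply,
    ← Nat.card_image_of_injective Fin.val_injective, ← Set.ncard_coe_finset, Nat.card_coe_set_eq]
  congr 2
  ext s
  simp only [Set.mem_image, Set.mem_inter_iff, Set.mem_ofPred_eq, Finset.coe_filter,
    Finset.mem_range]
  constructor
  · rintro ⟨r, ⟨hr, hrj⟩, rfl⟩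
    exact ⟨hrj, hr⟩
  · rintro ⟨hsj, hs⟩
    exact ⟨⟨s, hsj.trans_le hj⟩, ⟨hs, hsj⟩, rfl⟩

lemma uniserial_dim (b : ZMod n) (ℓ : ℕ) : (uniserial k b ℓ).dim = intervalClass b ℓ := by
  rw [← uniserial_subDim_ker (k := k) b le_rfl, shiftDown_pow_length, LinearMap.ker_zero]
  funext i
  change (finrank k ↥(Pi.spanSubset k _) : ℤ) = finrank k ↥(Pi.spanSubset k _ ⊓ ⊤)
  rw [inf_top_eq]

lemma uniserial_isSemistable (Z : (ZMod n → ℤ) → ℂ) {b : ZMod n} {ℓ : ℕ} (hℓ : 0 < ℓ)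
    (hmax : ∀ m, 0 < m → m < ℓ → (Z (intervalClass b m)).arg ≤ (Z (intervalClass b ℓ)).arg) :
    IsSemistable Z (uniserial k b ℓ) := by
  refine ⟨by rw [uniserial_dim]; exact intervalClass_ne_zero b hℓ, fun U hU hbot htop => ?_⟩
  obtain ⟨d, rfl⟩ := exists_eq_ker_shiftDown_pow hU.1
  have hd : 0 < d := Nat.pos_of_ne_zero fun hd => hbot (by
    rw [hd, pow_zero, Module.End.one_eq_id, LinearMap.ker_id])
  have hdℓ : d < ℓ := lt_of_not_ge fun h => htop (by
    rw [pow_eq_zero_of_le h shiftDown_pow_length, LinearMap.ker_zero])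
  rw [uniserial_subDim_ker b hdℓ.le, uniserial_dim]
  exact hmax d hd hdℓ

lemma uniserial_not_exists_compl {b : ZMod n} {ℓ : ℕ} {U : Submodule k (Fin ℓ → k)}
    (hU : (uniserial k b ℓ).IsSubRep U) (hbot : U ≠ ⊥) (htop : U ≠ ⊤) :
    ¬ ∃ U', (uniserial k b ℓ).IsSubRep U' ∧ U ⊓ U' = ⊥ ∧ U ⊔ U' = ⊤ := by
  rintro ⟨U', hU', hinf, hsup⟩
  rcases le_total_of_map_shiftDown_le hU.1 hU'.1 with h | h
  · exact hbot (by rwa [inf_eq_left.mpr h] at hinf)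
  · exact htop (by rwa [sup_eq_left.mpr h] at hsup)

end Uniserial

/-- `𝒯ₙ` admits no completely discrete stability function: for every stability function
`Z` there is a phase `μ` such that the subcategory `𝒜_μ` of semistable objects of phase
`μ` is nonzero and not semisimple, i.e. some semistable object of phase `μ` has a
nonzero proper subrepresentation of phase `μ` admitting no subrepresentation
complement. -/
theorem stmt_9 (k : Type) [Field k] (n : ℕ) [NeZero n]
    (Z : (ZMod n → ℤ) → ℂ) (hZ : IsStabilityFunction n Z) :
    ∃ μ : ℝ,
      (∃ M : NilpRep k n, IsSemistable Z M ∧ (Z M.dim).arg = μ) ∧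
      (∃ (M : NilpRep k n) (U : Submodule k M.carrier),
        IsSemistable Z M ∧ (Z M.dim).arg = μ ∧
        M.IsSubRep U ∧ U ≠ ⊥ ∧ U ≠ ⊤ ∧ (Z (M.subDim U)).arg = μ ∧
        ¬ ∃ U' : Submodule k M.carrier,
            M.IsSubRep U' ∧ U ⊓ U' = ⊥ ∧ U ⊔ U' = ⊤) := by
  obtain ⟨b, j, ℓ, hj, hjℓ, htie, hmax⟩ := exists_prefix_arg_eq_max_arg
    (φ := fun b m => Z (intervalClass b m))
    (fun b m hm => hZ.2 _ (intervalClass_nonneg b m) (intervalClass_ne_zero b hm))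
    (fun b m m' => by simp only [intervalClass_add, hZ.1])
  have hss := uniserial_isSemistable (k := k) Z (hj.trans hjℓ) fun m hm _ => hmax m hm
  have hU := uniserial_isSubRep_ker (k := k) b ℓ j
  have hbot := ker_shiftDown_pow_ne_bot (R := k) (hj.trans hjℓ) hj
  have htop := ker_shiftDown_pow_ne_top (R := k) hjℓ
  refine ⟨_, ⟨_, hss, rfl⟩, _, _, hss, rfl, hU, hbot, htop, ?_,
    uniserial_not_exists_compl hU hbot htop⟩
  rw [uniserial_subDim_ker b hjℓ.le, uniserial_dim]
  exact htie
end

section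
/- Let 𝕋 be the quantum torus over ℚ(q^{1/2}) with generators y₁, y₂ satisfying y₁y₂ = q y₂y₁ (completed with respect to total degree). Then the quantum dilogarithm satisfies the pentagon identity: 𝔼(y₁)𝔼(y₂) = 𝔼(y₂)𝔼(q^{−1/2} y₁y₂)𝔼(y₁). -/
noncomputable section

/-- The base field `ℚ(q^{1/2})`, realised as rational functions in `X = q^{1/2}`. -/
abbrev QTField : Type := RatFunc ℚ

/-- `q^{1/2}`. -/
def sqrtq : QTField := RatFunc.X

/-- The completed quantum torus on two generators `y₁, y₂` with `y₁y₂ = q y₂y₁`: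
formal series `Σ c_{a,b} y₁^a y₂^b`, encoded by coefficient functions on `ℕ × ℕ`. -/
def QT2 : Type := ℕ × ℕ → QTField

/-- Multiplication in the completed quantum torus: with the normally ordered basis
`y^{(a,b)} = y₁^a y₂^b` and `y₂ y₁ = q⁻¹ y₁ y₂`, one has
`y^{(a,b)} · y^{(c,d)} = q^{−bc} y^{(a+c, b+d)}`. -/
def qt2mul (f g : QT2) : QT2 := fun p =>
  ∑ x ∈ Finset.range (p.1 + 1), ∑ y ∈ Finset.range (p.2 + 1),
    f (x, y) * g (p.1 - x, p.2 - y) * sqrtq ^ (-(2 * (y * (p.1 - x)) : ℤ))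

/-- The coefficients of the quantum dilogarithm: `c m = q^{m²/2} / ∏_{k=1}^m (qᵐ − q^{m−k})`. -/
def qdlogCoeff (m : ℕ) : QTField :=
  sqrtq ^ (m ^ 2) / ∏ j ∈ Finset.range m, (sqrtq ^ (2 * m) - sqrtq ^ (2 * j))

/-- `𝔼(y₁) = Σ_m c_m y₁^m`. -/
def E₁ : QT2 := fun p => if p.2 = 0 then qdlogCoeff p.1 else 0

/-- `𝔼(y₂) = Σ_m c_m y₂^m`. -/
def E₂ : QT2 := fun p => if p.1 = 0 then qdlogCoeff p.2 else 0

/-- `𝔼(q^{−1/2} y₁ y₂) = Σ_m c_m (q^{−1/2} y₁y₂)^m = Σ_m c_m q^{−m²/2} y₁^m y₂^m`,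
using `(q^{−1/2} y₁ y₂)^m = q^{−m²/2} y₁^m y₂^m`. -/
def E₁₂ : QT2 := fun p =>
  if p.1 = p.2 then qdlogCoeff p.1 * sqrtq ^ (-(p.1 ^ 2 : ℤ)) else 0
/-! Comparing coefficients of `y₁^a y₂^b`, the left side gives `c_a c_b`, and the right side a sum
over the exponent `x` of `y₁y₂` in the middle factor. Writing `c_m = q^{m²/2} / |GL_m(𝔽_q)|` and
splitting `|GL_a(𝔽_q)|` along `𝔽_q^x ⊆ 𝔽_q^a`, the `x`-th term becomes `c_a c_b q^{-ab}` times
`|{a × b matrices of rank x over 𝔽_q}|`, all read as rational functions of `q`. The identity is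
thus the count `∑_x |{rank x}| = q^{ab}`, proved by induction on `a`. -/

open Finset

section QFalling

variable {K : Type*} [Field K] (q : K)

/-- Over `𝔽_q`, the number of injective linear maps `𝔽_q^k → 𝔽_q^n`. -/
def qFalling (n k : ℕ) : K := ∏ j ∈ range k, (q ^ n - q ^ j)

lemma qFalling_succ (n k : ℕ) : qFalling q n (k + 1) = qFalling q n k * (q ^ n - q ^ k) :=
  prod_range_succ _ _

lemma qFalling_succ_succ (n k : ℕ) :
    qFalling q (n + 1) (k + 1) = (q ^ (n + 1) - 1) * q ^ k * qFalling q n k := by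
  have factor : ∀ j, q ^ (n + 1) - q ^ (j + 1) = q * (q ^ n - q ^ j) := fun j => by ring
  simp only [qFalling, prod_range_succ', factor, prod_mul_distrib, prod_const, card_range]
  ring

lemma qFalling_add_self (k m : ℕ) :
    qFalling q (k + m) (k + m) = qFalling q (k + m) k * q ^ (k * m) * qFalling q m m := by
  have factor : ∀ i, q ^ (k + m) - q ^ (k + i) = q ^ k * (q ^ m - q ^ i) := fun i => by ring
  simp only [qFalling, prod_range_add, factor, prod_mul_distrib, prod_const, card_range, pow_mul]
  ring

lemma qFalling_eq_zero_of_lt {n k : ℕ} (h : n < k) : qFalling q n k = 0 :=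
  prod_eq_zero (mem_range.2 h) (sub_self _)

variable {q}

lemma qFalling_ne_zero (hq : Function.Injective (q ^ · : ℕ → K)) {n k : ℕ} (h : k ≤ n) :
    qFalling q n k ≠ 0 :=
  prod_ne_zero_iff.2 fun j hj => sub_ne_zero.2 fun e => by
    have := hq e
    simp only [mem_range] at hj
    omega

variable (q)

/-- Over `𝔽_q`, the number of `a × b` matrices of rank `x`. -/
def qRankCount (a b x : ℕ) : K := qFalling q a x * qFalling q b x / qFalling q x x

lemma qRankCount_succ_succ (hq : Function.Injective (q ^ · : ℕ → K)) (a b x : ℕ) :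
    qRankCount q (a + 1) b (x + 1) =
      q ^ (x + 1) * qRankCount q a b (x + 1) + (q ^ b - q ^ x) * qRankCount q a b x := by
  have hq0 : q ≠ 0 := by
    rintro rfl
    exact absurd (@hq 1 2 (by simp)) (by decide)
  have hqx : q ^ (x + 1) - 1 ≠ 0 := sub_ne_zero.2 fun e => by
    simpa using @hq (x + 1) 0 (by simpa using e)
  have hF := qFalling_ne_zero hq le_rfl (n := x)
  simp only [qRankCount, qFalling_succ_succ, qFalling_succ]
  field_simp
  ring

theorem sum_qRankCount (hq : Function.Injective (q ^ · : ℕ → K)) (a b : ℕ) :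
    ∑ x ∈ range (a + 1), qRankCount q a b x = q ^ (a * b) := by
  induction a with
  | zero => simp [qRankCount, qFalling]
  | succ a ih =>
    have hzero : qRankCount q (a + 1) b 0 = qRankCount q a b 0 := by simp [qRankCount, qFalling]
    have hlast : qRankCount q a b (a + 1) = 0 := by
      simp [qRankCount, qFalling_eq_zero_of_lt q (Nat.lt_succ_self a)]
    calc ∑ x ∈ range (a + 1 + 1), qRankCount q (a + 1) b x
        = (qRankCount q a b 0 + ∑ x ∈ range (a + 1), q ^ (x + 1) * qRankCount q a b (x + 1)) +
            ∑ x ∈ range (a + 1), (q ^ b - q ^ x) * qRankCount q a b x := by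
          rw [sum_range_succ', hzero, add_comm, add_assoc]
          simp only [qRankCount_succ_succ q hq, sum_add_distrib]
      _ = ∑ x ∈ range (a + 1 + 1), q ^ x * qRankCount q a b x +
            ∑ x ∈ range (a + 1), (q ^ b - q ^ x) * qRankCount q a b x := by
          rw [sum_range_succ' (fun x => q ^ x * qRankCount q a b x), pow_zero, one_mul,
            add_comm _ (qRankCount q a b 0)]
      _ = ∑ x ∈ range (a + 1), q ^ b * qRankCount q a b x := by
          rw [sum_range_succ _ (a + 1), hlast, mul_zero, add_zero, ← sum_add_distrib]
          simp only [← add_mul, add_sub_cancel]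
      _ = q ^ ((a + 1) * b) := by rw [← mul_sum, ih, ← pow_add]; ring_nf

end QFalling

lemma sqrtq_ne_zero : sqrtq ≠ 0 := RatFunc.X_ne_zero

lemma sqrtq_sq_pow_injective : Function.Injective ((sqrtq ^ 2) ^ · : ℕ → QTField) := by
  intro m n h
  have hX : (Polynomial.X ^ (2 * m) : Polynomial ℚ) = Polynomial.X ^ (2 * n) :=
    RatFunc.algebraMap_injective ℚ (by simpa [sqrtq, ← RatFunc.algebraMap_X, pow_mul] using h)
  have := congrArg Polynomial.natDegree hX
  simp only [Polynomial.natDegree_X_pow] at this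
  omega

lemma qdlogCoeff_eq (m : ℕ) : qdlogCoeff m = sqrtq ^ (m ^ 2) / qFalling (sqrtq ^ 2) m m := by
  simp only [qdlogCoeff, qFalling, ← pow_mul]

lemma qt2mul_apply_of_left_y₁_only {f : QT2} (hf : ∀ a b, b ≠ 0 → f (a, b) = 0) (g : QT2)
    (a b : ℕ) : qt2mul f g (a, b) = ∑ x ∈ range (a + 1), f (x, 0) * g (a - x, b) := by
  refine sum_congr rfl fun x _ => ?_
  rw [sum_eq_single_of_mem 0 (by simp)]
  · simp
  · intro y _ hy
    simp [hf _ _ hy]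

lemma qt2mul_apply_of_left_y₂_only {f : QT2} (hf : ∀ a b, a ≠ 0 → f (a, b) = 0) (g : QT2)
    (a b : ℕ) : qt2mul f g (a, b) =
      ∑ y ∈ range (b + 1), f (0, y) * g (a, b - y) * sqrtq ^ (-(2 * (y * a)) : ℤ) := by
  rw [qt2mul, sum_eq_single_of_mem 0 (by simp)]
  · simp
  · intro x _ hx
    simp [hf _ _ hx]

lemma qt2mul_apply_of_right_y₁_only {f : QT2} (hf : ∀ a b, b ≠ 0 → f (a, b) = 0) (g : QT2)
    (a b : ℕ) : qt2mul g f (a, b) =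
      ∑ x ∈ range (a + 1), g (x, b) * f (a - x, 0) * sqrtq ^ (-(2 * (b * (a - x))) : ℤ) := by
  refine sum_congr rfl fun x _ => ?_
  rw [sum_eq_single_of_mem b (by simp)]
  · simp
  · intro y hy hyb
    rw [hf _ (b - y) (by simp only [mem_range] at hy; omega)]
    simp

lemma qt2mul_E₁_E₂_apply (a b : ℕ) : qt2mul E₁ E₂ (a, b) = qdlogCoeff a * qdlogCoeff b := by
  rw [qt2mul_apply_of_left_y₁_only (fun _ _ h => if_neg h), sum_eq_single_of_mem a (by simp)]
  · simp [E₁, E₂]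
  · intro x hx hxa
    simp only [mem_range] at hx
    simp [E₂, show a - x ≠ 0 by omega]

lemma qt2mul_E₂_E₁₂_apply (x b : ℕ) : qt2mul E₂ E₁₂ (x, b) =
    if x ≤ b then
      qdlogCoeff (b - x) * qdlogCoeff x * (sqrtq ^ x ^ 2)⁻¹ * (sqrtq ^ (2 * (b - x) * x))⁻¹
    else 0 := by
  rw [qt2mul_apply_of_left_y₂_only (fun _ _ h => if_neg h)]
  split_ifs with hxb
  · rw [sum_eq_single_of_mem (b - x) (by simp only [mem_range]; omega)]
    · simp only [E₂, E₁₂, Nat.sub_sub_self hxb, if_pos, zpow_neg]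
      norm_cast
      ring
    · intro y hy hyx
      simp only [mem_range] at hy
      simp [E₁₂, show x ≠ b - y by omega]
  · refine sum_eq_zero fun y hy => ?_
    simp only [mem_range] at hy
    simp [E₁₂, show x ≠ b - y by omega]

lemma qt2mul_E₂_E₁₂_apply_mul_qdlogCoeff {x a : ℕ} (hxa : x ≤ a) (b : ℕ) :
    qt2mul E₂ E₁₂ (x, b) * qdlogCoeff (a - x) * sqrtq ^ (-(2 * (b * (a - x))) : ℤ) =
      qdlogCoeff a * qdlogCoeff b * (sqrtq ^ (2 * (a * b)))⁻¹ *
        qRankCount (sqrtq ^ 2) a b x := by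
  have hq := sqrtq_sq_pow_injective
  rw [qt2mul_E₂_E₁₂_apply]
  split_ifs with hxb
  · obtain ⟨u, rfl⟩ := Nat.exists_eq_add_of_le hxa
    obtain ⟨v, rfl⟩ := Nat.exists_eq_add_of_le hxb
    have hF : ∀ {n k}, k ≤ n → qFalling (sqrtq ^ 2) n k ≠ 0 := fun h => qFalling_ne_zero hq h
    have hs := sqrtq_ne_zero
    simp only [Nat.add_sub_cancel_left, qdlogCoeff_eq, qRankCount, qFalling_add_self, zpow_neg]
    push_cast [add_sub_cancel_left]
    norm_cast
    field_simp [hF (Nat.le_add_right x u), hF (Nat.le_add_right x v)]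
    ring
  · simp [qRankCount, qFalling_eq_zero_of_lt _ (not_le.1 hxb)]

/-- The pentagon identity for the quantum dilogarithm in the completed quantum torus
with `y₁y₂ = q y₂y₁`:  `𝔼(y₁) 𝔼(y₂) = 𝔼(y₂) 𝔼(q^{−1/2} y₁y₂) 𝔼(y₁)`. -/
theorem stmt_16 : qt2mul E₁ E₂ = qt2mul (qt2mul E₂ E₁₂) E₁ := by
  funext ⟨a, b⟩
  rw [qt2mul_E₁_E₂_apply, qt2mul_apply_of_right_y₁_only (fun _ _ h => if_neg h)]
  have hterm : ∀ x ∈ range (a + 1),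
      qt2mul E₂ E₁₂ (x, b) * E₁ (a - x, 0) * sqrtq ^ (-(2 * (b * (a - x))) : ℤ) =
        qdlogCoeff a * qdlogCoeff b * (sqrtq ^ (2 * (a * b)))⁻¹ *
          qRankCount (sqrtq ^ 2) a b x := fun x hx => by
    simpa [E₁] using qt2mul_E₂_E₁₂_apply_mul_qdlogCoeff (Nat.lt_succ_iff.1 (mem_range.1 hx)) b
  rw [sum_congr rfl hterm, ← mul_sum, sum_qRankCount _ sqrtq_sq_pow_injective, ← pow_mul,
    inv_mul_cancel_right₀ (pow_ne_zero _ sqrtq_ne_zero)]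

end
end
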